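/- arXiv:1708.02028 — 7 statements merged into one kernel-verified Lean document; each statement's English description precedes it below -/
import Mathlib

section
/- Let G be a graph with maximum degree at most d. For every edge xy of G, the number c_G(xy) of edges of G at line-graph distance at most 2 from xy (including xy itself) satisfies c_G(xy) ≤ 2d² − 2d + 1 − (d·n_{xy} + m_{xy}), where n_{xy} = |N_G(x) ∩ N_G(y)| and m_{xy} is the number of edges of G with both endpoints in (N_G(x) ∪ N_G(y)) \ {x, y}. -/
open Classical

variable {V : Type*}

/-- Two edges (as `Sym2 V`) are in conflict: they are at distance at most 2
in the line graph, i.e. they share a vertex or some edge of `G` joins them. -/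
def Conflict (G : SimpleGraph V) (e f : Sym2 V) : Prop :=
  ∃ a ∈ e, ∃ b ∈ f, a = b ∨ G.Adj a b

/-- `C_G(e)`: the set of edges of `G` in conflict with `e` (including `e`). -/
def CSet (G : SimpleGraph V) (e : Sym2 V) : Set (Sym2 V) :=
  {f | f ∈ G.edgeSet ∧ Conflict G e f}

/-- `PC_G(M, e)`: the private conflict edges of `e` with respect to `M`. -/
def PCSet (G : SimpleGraph V) (M : Set (Sym2 V)) (e : Sym2 V) : Set (Sym2 V) :=
  CSet G e \ ⋃ f ∈ M \ {e}, CSet G f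

/-- `M` is an induced matching of `G`. -/
def IsInducedMatching (G : SimpleGraph V) (M : Set (Sym2 V)) : Prop :=
  M ⊆ G.edgeSet ∧ ∀ e ∈ M, ∀ f ∈ M, e ≠ f → ¬ Conflict G e f

/-- `M` is a maximal induced matching of `G`. -/
def IsMaximalInducedMatching (G : SimpleGraph V) (M : Set (Sym2 V)) : Prop :=
  IsInducedMatching G M ∧ ∀ M', IsInducedMatching G M' → M ⊆ M' → M' = M

/-- `M` is stable under the local-search exchange operation: any two distinct
private conflict edges of an edge of `M` conflict with each other. -/
def LSStable (G : SimpleGraph V) (M : Set (Sym2 V)) : Prop :=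
  ∀ e ∈ M, ∀ e' ∈ PCSet G M e, ∀ e'' ∈ PCSet G M e, e' ≠ e'' → e'' ∈ CSet G e'

/-- The edges of `G` with both endpoints in `S`. -/
def edgesWithin (G : SimpleGraph V) (S : Set V) : Set (Sym2 V) :=
  {e | e ∈ G.edgeSet ∧ ∀ a ∈ e, a ∈ S}

/-- The edges of `G` with one endpoint in `S` and the other in `T`. -/
def edgesBetween (G : SimpleGraph V) (S T : Set V) : Set (Sym2 V) :=
  {e | e ∈ G.edgeSet ∧ ∃ a b : V, e = s(a, b) ∧ a ∈ S ∧ b ∈ T}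

/-- `G` has no induced cycle of length 4. -/
def C4Free (G : SimpleGraph V) : Prop :=
  ¬ ∃ a b c d : V, G.Adj a b ∧ G.Adj b c ∧ G.Adj c d ∧ G.Adj d a ∧
      ¬ G.Adj a c ∧ ¬ G.Adj b d ∧ a ≠ c ∧ b ≠ d

/-- `G` has no induced cycle of length 5. -/
def C5Free (G : SimpleGraph V) : Prop :=
  ¬ ∃ a b c d e : V, G.Adj a b ∧ G.Adj b c ∧ G.Adj c d ∧ G.Adj d e ∧ G.Adj e a ∧
      ¬ G.Adj a c ∧ ¬ G.Adj a d ∧ ¬ G.Adj b d ∧ ¬ G.Adj b e ∧ ¬ G.Adj c e ∧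
      a ≠ c ∧ a ≠ d ∧ b ≠ d ∧ b ≠ e ∧ c ≠ e

/-- `G` has no induced `K_{1,3}` (claw). -/
def ClawFree (G : SimpleGraph V) : Prop :=
  ¬ ∃ v a b c : V, G.Adj v a ∧ G.Adj v b ∧ G.Adj v c ∧
      ¬ G.Adj a b ∧ ¬ G.Adj a c ∧ ¬ G.Adj b c ∧ a ≠ b ∧ a ≠ c ∧ b ≠ c

/-!
Let `S = N(x) ∪ N(y)`; it contains `x` and `y`. Counting the pairs (vertex of `S`, incident edge)
gives `c(xy) + |E(S)| = ∑_{v ∈ S} deg v ≤ d |S| = d (deg x + deg y - n_xy)`, where `E(S)` is the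
set of edges inside `S`. Now `E(S)` contains, disjointly, the `m_xy` edges inside `S \ {x, y}` and
the `deg x + deg y - 1` edges at `x` or `y`, so
`c(xy) ≤ (d - 1)(deg x + deg y) + 1 - d n_xy - m_xy ≤ 2d² - 2d + 1 - d n_xy - m_xy`.
-/

open Finset SimpleGraph
open scoped Classical

lemma card_filter_mem_sym2_of_not_isDiag [DecidableEq V] (S : Finset V) {e : Sym2 V}
    [Decidable (∃ v ∈ e, v ∈ S)] [Decidable (∀ v ∈ e, v ∈ S)] (he : ¬ e.IsDiag) :
    #{v ∈ S | v ∈ e} = (if ∃ v ∈ e, v ∈ S then 1 else 0) + (if ∀ v ∈ e, v ∈ S then 1 else 0) := by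
  obtain ⟨a, b, rfl⟩ : ∃ a b, e = s(a, b) := Sym2.exists.1 ⟨e, rfl⟩
  have hab : a ≠ b := by simpa using he
  have : {v ∈ S | v ∈ s(a, b)} = S ∩ {a, b} := by ext; simp [and_comm]
  rw [this]
  by_cases ha : a ∈ S <;> by_cases hb : b ∈ S <;>
    simp [ha, hb, hab, inter_insert_of_mem, inter_insert_of_notMem]

namespace SimpleGraph

variable [Fintype V] (G : SimpleGraph V)

theorem sum_degree_eq_card_edges_meeting_add_card_edges_within (S : Finset V) :
    ∑ v ∈ S, G.degree v =
      #{e ∈ G.edgeFinset | ∃ v ∈ e, v ∈ S} + #{e ∈ G.edgeFinset | ∀ v ∈ e, v ∈ S} := by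
  calc ∑ v ∈ S, G.degree v = ∑ v ∈ S, #(G.edgeFinset.bipartiteAbove (· ∈ ·) v) := by
        simp only [← card_incidenceFinset_eq_degree, incidenceFinset_eq_filter, bipartiteAbove]
    _ = ∑ e ∈ G.edgeFinset, #(S.bipartiteBelow (· ∈ ·) e) :=
        sum_card_bipartiteAbove_eq_sum_card_bipartiteBelow _
    _ = ∑ e ∈ G.edgeFinset,
          ((if ∃ v ∈ e, v ∈ S then 1 else 0) + (if ∀ v ∈ e, v ∈ S then 1 else 0)) :=
        sum_congr rfl fun e he ↦
          card_filter_mem_sym2_of_not_isDiag S (G.not_isDiag_of_mem_edgeSet (mem_edgeFinset.1 he))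
    _ = _ := by rw [sum_add_distrib, card_filter, card_filter]

lemma ncard_neighborSet (v : V) : (G.neighborSet v).ncard = G.degree v := by
  rw [← card_neighborFinset_eq_degree, ← Set.ncard_coe_finset, coe_neighborFinset]

variable {G} {x y : V}

lemma card_incidenceFinset_union_add_one (hxy : G.Adj x y) :
    #(G.incidenceFinset x ∪ G.incidenceFinset y) + 1 = G.degree x + G.degree y := by
  have hinter : G.incidenceFinset x ∩ G.incidenceFinset y = {s(x, y)} := by
    ext e
    simp only [mem_inter, mem_incidenceFinset, mem_singleton]
    exact ⟨fun ⟨⟨_, hx⟩, ⟨_, hy⟩⟩ ↦ (Sym2.mem_and_mem_iff hxy.ne).1 ⟨hx, hy⟩,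
      by rintro rfl; exact ⟨G.mk'_mem_incidenceSet_left_iff.2 hxy,
        G.mk'_mem_incidenceSet_right_iff.2 hxy⟩⟩
  rw [← card_incidenceFinset_eq_degree, ← card_incidenceFinset_eq_degree,
    ← card_union_add_card_inter, hinter, card_singleton]

lemma card_edges_within_sdiff_add_card_incidenceFinset_le (hxy : G.Adj x y) :
    #{e ∈ G.edgeFinset | ∀ v ∈ e, v ∈ (G.neighborFinset x ∪ G.neighborFinset y) \ {x, y}} +
        #(G.incidenceFinset x ∪ G.incidenceFinset y) ≤
      #{e ∈ G.edgeFinset | ∀ v ∈ e, v ∈ G.neighborFinset x ∪ G.neighborFinset y} := by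
  have hdisj : Disjoint
      {e ∈ G.edgeFinset | ∀ v ∈ e, v ∈ (G.neighborFinset x ∪ G.neighborFinset y) \ {x, y}}
      (G.incidenceFinset x ∪ G.incidenceFinset y) := by
    refine Finset.disjoint_left.2 fun e he he' ↦ ?_
    obtain ⟨v, hv, rfl | rfl⟩ : ∃ v ∈ e, v = x ∨ v = y := by
      simp only [mem_union, mem_incidenceFinset] at he'
      rcases he' with ⟨-, h⟩ | ⟨-, h⟩ <;> exact ⟨_, h, by simp⟩
    all_goals simpa using (mem_filter.1 he).2 _ hv
  rw [← card_union_of_disjoint hdisj]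
  refine card_le_card (union_subset (fun e he ↦ ?_) fun e he ↦ ?_)
  · simp only [mem_filter, mem_sdiff] at he ⊢
    exact ⟨he.1, fun v hv ↦ (he.2 v hv).1⟩
  · rw [mem_union, mem_incidenceFinset, mem_incidenceFinset] at he
    rcases he with ⟨he, hx⟩ | ⟨he, hy⟩
    · obtain ⟨w, rfl⟩ := Sym2.mem_iff_exists.1 hx
      rw [mem_edgeSet] at he
      simp [hxy.symm, he]
    · obtain ⟨w, rfl⟩ := Sym2.mem_iff_exists.1 hy
      rw [mem_edgeSet] at he
      simp [hxy, he]

end SimpleGraph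

lemma conflict_mk_iff {G : SimpleGraph V} {x y : V} (hxy : G.Adj x y) (f : Sym2 V) :
    Conflict G s(x, y) f ↔ ∃ b ∈ f, G.Adj x b ∨ G.Adj y b := by
  simp only [Conflict, Sym2.mem_iff, exists_eq_or_imp, exists_eq_left]
  constructor
  · rintro (⟨b, hb, rfl | h⟩ | ⟨b, hb, rfl | h⟩)
    exacts [⟨_, hb, .inr hxy.symm⟩, ⟨b, hb, .inl h⟩, ⟨_, hb, .inl hxy⟩, ⟨b, hb, .inr h⟩]
  · rintro ⟨b, hb, h | h⟩
    exacts [.inl ⟨b, hb, .inr h⟩, .inr ⟨b, hb, .inr h⟩]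

lemma edgesWithin_coe [Fintype V] (G : SimpleGraph V) (T : Finset V) :
    edgesWithin G T = ↑{e ∈ G.edgeFinset | ∀ v ∈ e, v ∈ T} := by
  ext e
  simp [edgesWithin]

lemma CSet_eq_edges_meeting [Fintype V] {G : SimpleGraph V} {x y : V} (hxy : G.Adj x y) :
    CSet G s(x, y) =
      ↑{e ∈ G.edgeFinset | ∃ v ∈ e, v ∈ G.neighborFinset x ∪ G.neighborFinset y} := by
  ext f
  simp [CSet, conflict_mk_iff hxy]

theorem stmt0_general [Fintype V] (G : SimpleGraph V) (d : ℕ)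
    (hΔ : ∀ v : V, (G.neighborSet v).ncard ≤ d) (x y : V) (hxy : G.Adj x y) :
    ((CSet G s(x, y)).ncard : ℤ) ≤
      2 * (d : ℤ) ^ 2 - 2 * d + 1 -
        ((d : ℤ) * ((G.neighborSet x ∩ G.neighborSet y).ncard : ℤ) +
          ((edgesWithin G ((G.neighborSet x ∪ G.neighborSet y) \ {x, y})).ncard : ℤ)) := by
  set S := G.neighborFinset x ∪ G.neighborFinset y
  have hdeg (v : V) : G.degree v ≤ d := G.ncard_neighborSet v ▸ hΔ v
  have hd_pos : 0 < d := ((G.degree_pos_iff_exists_adj x).2 ⟨y, hxy⟩).trans_le (hdeg x)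
  have hsum := G.sum_degree_eq_card_edges_meeting_add_card_edges_within S
  have hsum_le : ∑ v ∈ S, G.degree v ≤ #S * d := sum_le_card_nsmul _ _ _ fun v _ ↦ hdeg v
  have hS : #S + #(G.neighborFinset x ∩ G.neighborFinset y) = G.degree x + G.degree y :=
    card_union_add_card_inter _ _
  have hW := card_edges_within_sdiff_add_card_incidenceFinset_le hxy
  have hI := card_incidenceFinset_union_add_one hxy
  have hset : (G.neighborSet x ∪ G.neighborSet y) \ {x, y} = ↑(S \ {x, y}) := by
    simp [S]
  have hn : (G.neighborSet x ∩ G.neighborSet y).ncard =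
      #(G.neighborFinset x ∩ G.neighborFinset y) := by
    rw [← Set.ncard_coe_finset, coe_inter, coe_neighborFinset, coe_neighborFinset]
  rw [CSet_eq_edges_meeting hxy, hset, edgesWithin_coe, hn, Set.ncard_coe_finset,
    Set.ncard_coe_finset]
  have hdx := hdeg x
  have hdy := hdeg y
  zify at *
  nlinarith

/-- upper bound on the number of conflict edges of an edge `xy`. -/
theorem stmt0 [Fintype V] (G : SimpleGraph V) (d : ℕ) (hd : 3 ≤ d)
    (hΔ : ∀ v : V, (G.neighborSet v).ncard ≤ d) (x y : V) (hxy : G.Adj x y) :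
    ((CSet G s(x, y)).ncard : ℤ) ≤
      2 * (d : ℤ) ^ 2 - 2 * d + 1 -
        ((d : ℤ) * ((G.neighborSet x ∩ G.neighborSet y).ncard : ℤ) +
          ((edgesWithin G ((G.neighborSet x ∪ G.neighborSet y) \ {x, y})).ncard : ℤ)) :=
  stmt0_general G d hΔ x y hxy
end

section
/- If G is a d-regular graph with d ≥ 1, then every induced matching M of G satisfies |M| ≤ m(G)/(2d − 1), where m(G) is the number of edges of G. -/
open Classical

variable {V : Type*}

/-!
An edge `ab` of a `d`-regular graph meets exactly `2d - 1` edges (itself included). For two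
distinct edges of an induced matching these sets of edges are disjoint, since an edge meeting
both would join them; so `|M| (2d - 1) ≤ m(G)`.
-/

open Finset

namespace SimpleGraph

variable (G : SimpleGraph V)

theorem eq_or_adj_of_mem_edgeSet {g : Sym2 V} (hg : g ∈ G.edgeSet) {x y : V}
    (hx : x ∈ g) (hy : y ∈ g) : x = y ∨ G.Adj x y := by
  induction g using Sym2.ind with
  | _ u v =>
    rw [mem_edgeSet] at hg
    rw [Sym2.mem_iff] at hx hy
    rcases hx with rfl | rfl <;> rcases hy with rfl | rfl <;> simp [hg, hg.symm]

variable [Fintype V] [DecidableRel G.Adj] [DecidableEq V]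

def incidentEdgeFinset (e : Sym2 V) : Finset (Sym2 V) :=
  {g ∈ G.edgeFinset | ∃ x ∈ e, x ∈ g}

theorem incidentEdgeFinset_mk (a b : V) :
    G.incidentEdgeFinset s(a, b) = G.incidenceFinset a ∪ G.incidenceFinset b := by
  ext g
  simp [incidentEdgeFinset, incidenceSet, and_or_left]

theorem card_incidentEdgeFinset_of_adj {a b : V} (h : G.Adj a b) :
    #(G.incidentEdgeFinset s(a, b)) = G.degree a + G.degree b - 1 := by
  have hinter : G.incidenceFinset a ∩ G.incidenceFinset b = {s(a, b)} := by
    ext g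
    simp only [Finset.mem_inter, mem_incidenceFinset, Finset.mem_singleton]
    rw [← Set.mem_inter_iff, G.incidenceSet_inter_incidenceSet_of_adj h, Set.mem_singleton_iff]
  have := Finset.card_union_add_card_inter (G.incidenceFinset a) (G.incidenceFinset b)
  rw [hinter, Finset.card_singleton, card_incidenceFinset_eq_degree,
    card_incidenceFinset_eq_degree] at this
  rw [incidentEdgeFinset_mk]
  omega

end SimpleGraph

namespace IsInducedMatching

variable [Fintype V] {G : SimpleGraph V} {M : Set (Sym2 V)}

theorem disjoint_incidentEdgeFinset (hM : IsInducedMatching G M) {e f : Sym2 V}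
    (he : e ∈ M) (hf : f ∈ M) (hef : e ≠ f) :
    Disjoint (G.incidentEdgeFinset e) (G.incidentEdgeFinset f) := by
  rw [Finset.disjoint_left]
  intro g hge hgf
  simp only [SimpleGraph.incidentEdgeFinset, mem_filter, SimpleGraph.mem_edgeFinset] at hge hgf
  obtain ⟨hg, x, hxe, hxg⟩ := hge
  obtain ⟨-, y, hyf, hyg⟩ := hgf
  exact hM.2 e he f hf hef ⟨x, hxe, y, hyf, G.eq_or_adj_of_mem_edgeSet hg hxg hyg⟩

theorem sum_card_incidentEdgeFinset_le (hM : IsInducedMatching G M) :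
    ∑ e ∈ M.toFinset, #(G.incidentEdgeFinset e) ≤ #G.edgeFinset := by
  rw [← card_biUnion fun e he f hf hef =>
    hM.disjoint_incidentEdgeFinset (by simpa using he) (by simpa using hf) hef]
  exact card_le_card (biUnion_subset.2 fun e _ => filter_subset _ _)

theorem ncard_mul_le_ncard_edgeSet (hM : IsInducedMatching G M) {d : ℕ}
    (hreg : G.IsRegularOfDegree d) : M.ncard * (2 * d - 1) ≤ G.edgeSet.ncard := by
  have hcard : ∀ e ∈ M.toFinset, #(G.incidentEdgeFinset e) = 2 * d - 1 := by
    intro e he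
    induction e using Sym2.ind with
    | _ a b =>
      rw [G.card_incidentEdgeFinset_of_adj (hM.1 (by simpa using he)), hreg, hreg]
      omega
  have := hM.sum_card_incidentEdgeFinset_le
  rw [sum_congr rfl hcard, sum_const, smul_eq_mul] at this
  rwa [Set.ncard_eq_toFinset_card', Set.ncard_eq_toFinset_card']

end IsInducedMatching

/-- in a `d`-regular graph, induced matchings have at most `m(G)/(2d-1)` edges. -/
theorem stmt1 [Fintype V] (G : SimpleGraph V) (d : ℕ) (hd : 1 ≤ d)
    (hreg : ∀ v : V, (G.neighborSet v).ncard = d)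
    (M : Set (Sym2 V)) (hM : IsInducedMatching G M) :
    (M.ncard : ℝ) ≤ (G.edgeSet.ncard : ℝ) / (2 * d - 1) := by
  have hregular : G.IsRegularOfDegree d := fun v => by
    rw [← hreg v, SimpleGraph.degree, SimpleGraph.neighborFinset, Set.ncard_eq_toFinset_card']
  have hcount : ((M.ncard * (2 * d - 1) : ℕ) : ℝ) ≤ G.edgeSet.ncard :=
    mod_cast hM.ncard_mul_le_ncard_edgeSet hregular
  have hd' : (1 : ℝ) ≤ d := mod_cast hd
  rw [le_div_iff₀ (by linarith)]
  push_cast [Nat.cast_sub (by omega : 1 ≤ 2 * d)] at hcount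
  exact hcount
end

section
/- Let G be a graph, M an induced matching of G, and xy an edge in M. Let PC_G(M, xy) = C_G(xy) \ ⋃_{f ∈ M, f ≠ xy} C_G(f) be the set of private conflict edges of xy. Let N₂ be the set of vertices outside N_G[x] ∪ N_G[y] that are incident with an edge of PC_G(M, xy). If M is maximal, then N₂ is an independent set in G. -/
open Classical

variable {V : Type*}

/- Suppose `uv` is an edge between two vertices of `N₂`. By maximality some `g ∈ M` conflicts
with `uv` through an endpoint `b`; `g ≠ xy` because `b` lies outside `N[x] ∪ N[y]`, so `g` also
conflicts with the private conflict edge of `xy` at `b`, contradicting privacy. -/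

section

variable {G : SimpleGraph V} {M : Set (Sym2 V)} {e f g : Sym2 V}

theorem Conflict.symm (h : Conflict G e f) : Conflict G f e := by
  obtain ⟨a, ha, b, hb, hab⟩ := h
  exact ⟨b, hb, a, ha, hab.imp Eq.symm SimpleGraph.Adj.symm⟩

theorem conflict_refl (e : Sym2 V) : Conflict G e e := by
  induction e using Sym2.ind with
  | _ a b => exact ⟨a, Sym2.mem_mk_left a b, a, Sym2.mem_mk_left a b, Or.inl rfl⟩

theorem IsInducedMatching.insert (hM : IsInducedMatching G M) (hf : f ∈ G.edgeSet)
    (hfree : ∀ g ∈ M, ¬ Conflict G g f) : IsInducedMatching G (insert f M) := by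
  refine ⟨Set.insert_subset hf hM.1, ?_⟩
  rintro e (rfl | he) g (rfl | hg) hne hc
  · exact hne rfl
  · exact hfree g hg hc.symm
  · exact hfree e he hc
  · exact hM.2 e he g hg hne hc

theorem IsMaximalInducedMatching.exists_conflict (hM : IsMaximalInducedMatching G M)
    (hf : f ∈ G.edgeSet) : ∃ g ∈ M, Conflict G g f := by
  by_cases hfM : f ∈ M
  · exact ⟨f, hfM, conflict_refl f⟩
  by_contra! hfree
  have hins := hM.2 _ (hM.1.insert hf hfree) (Set.subset_insert f M)
  exact hfM (hins ▸ Set.mem_insert f M)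

theorem not_conflict_of_mem_pcSet (he : e ∈ PCSet G M f) (hg : g ∈ M) (hgf : g ≠ f) :
    ¬ Conflict G g e :=
  fun hc => he.2 (Set.mem_biUnion (Set.mem_sdiff_singleton.mpr ⟨hg, hgf⟩) ⟨he.1.1, hc⟩)

theorem mem_closedNeighborhoods_of_mem_edge {x y a b : V} (ha : a ∈ s(x, y))
    (hab : a = b ∨ G.Adj a b) :
    b ∈ (G.neighborSet x ∪ {x}) ∪ (G.neighborSet y ∪ {y}) := by
  rcases Sym2.mem_iff.mp ha with rfl | rfl <;> rcases hab with rfl | h <;> simp [*]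

end

theorem stmt4_general (G : SimpleGraph V) (M : Set (Sym2 V))
    (hM : IsMaximalInducedMatching G M) (x y : V)
    (N₂ : Set V)
    (hN₂ : N₂ = {v : V | v ∉ (G.neighborSet x ∪ {x}) ∪ (G.neighborSet y ∪ {y}) ∧
      ∃ e ∈ PCSet G M s(x, y), v ∈ e}) :
    ∀ u ∈ N₂, ∀ v ∈ N₂, ¬ G.Adj u v := by
  intro u hu v hv huv
  obtain ⟨g, hgM, a, ha, b, hb, hab⟩ := hM.exists_conflict (G.mem_edgeSet.mpr huv)
  have hbN₂ : b ∈ N₂ := by rcases Sym2.mem_iff.mp hb with rfl | rfl <;> assumption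
  rw [hN₂] at hbN₂
  obtain ⟨hb_outer, e, he, hbe⟩ := hbN₂
  have hg : g ≠ s(x, y) := by
    rintro rfl
    exact hb_outer (mem_closedNeighborhoods_of_mem_edge ha hab)
  exact not_conflict_of_mem_pcSet he hgM hg ⟨a, ha, b, hbe, hab⟩

/-- the outer vertices incident with private conflict edges form an independent set. -/
theorem stmt4 (G : SimpleGraph V) (M : Set (Sym2 V))
    (hM : IsMaximalInducedMatching G M) (x y : V) (hxy : G.Adj x y)
    (hmem : s(x, y) ∈ M)
    (N₂ : Set V)
    (hN₂ : N₂ = {v : V | v ∉ (G.neighborSet x ∪ {x}) ∪ (G.neighborSet y ∪ {y}) ∧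
      ∃ e ∈ PCSet G M s(x, y), v ∈ e}) :
    ∀ u ∈ N₂, ∀ v ∈ N₂, ¬ G.Adj u v :=
  stmt4_general G M hM x y N₂ hN₂
end

section
/- Let G be a {C₃, C₄}-free graph of maximum degree at most d (d ≥ 3), and let M be an induced matching of G that is maximal and stable under the local-search exchange operation. Then for every edge xy ∈ M, the number of private conflict edges satisfies |PC_G(M, xy)| ≤ 2d − 1. -/
open Classical

variable {V : Type*}

/-!
The private conflict edges of `xy` pairwise conflict (by stability) and lie in `C(xy)`. Without
triangles and induced 4-cycles, two distinct vertices have at most one common neighbour. Such a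
conflict-clique consists of `xy` and, for `(u, v) = (x, y)` and `(y, x)`, of edges `vw` through `v`
and edges `pq` hanging from a neighbour `p` of `u`. Two hanging edges share `p` or have adjacent
ends `q`, so they lie in one star at `p` or number at most two; an edge `vw` conflicts with a
hanging `pq` only if `w ~ q`, so one hanging edge leaves at most one edge `vw` and two leave none.
Either way each pair `(u, v)` contributes at most `d - 1` edges.
-/

section ConflictClique

variable {G : SimpleGraph V}

theorem SimpleGraph.CliqueFree.not_adj_of_adj_of_adj (h : G.CliqueFree 3) {a b c : V}
    (hab : G.Adj a b) (hbc : G.Adj b c) : ¬ G.Adj a c :=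
  fun hac => h {a, b, c} (SimpleGraph.is3Clique_triple_iff.mpr ⟨hab, hac, hbc⟩)

theorem C4Free.commonNeighbors_subsingleton (hC3 : G.CliqueFree 3) (hC4 : C4Free G) {a b : V}
    (hab : a ≠ b) : (G.commonNeighbors a b).Subsingleton := by
  rintro u ⟨hau, hbu⟩ v ⟨hav, hbv⟩
  by_contra huv
  exact hC4 ⟨a, u, b, v, hau, hbu.symm, hbv, hav.symm,
    hC3.not_adj_of_adj_of_adj hau hbu.symm, hC3.not_adj_of_adj_of_adj hau.symm hav, hab, huv⟩

theorem conflict_mk_iff_s8 {a b c d : V} :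
    Conflict G s(a, b) s(c, d) ↔ (a = c ∨ G.Adj a c) ∨ (a = d ∨ G.Adj a d) ∨
      (b = c ∨ G.Adj b c) ∨ (b = d ∨ G.Adj b d) := by
  simp only [Conflict, Sym2.mem_iff, exists_eq_or_imp, exists_eq_left, or_assoc]

theorem ncard_incidenceSet_diff_le [Finite V] {d : ℕ}
    (hΔ : ∀ v : V, (G.neighborSet v).ncard ≤ d) {u v : V} (huv : G.Adj v u) :
    (G.incidenceSet v \ {s(v, u)}).ncard ≤ d - 1 := by
  have hcard : (G.incidenceSet v).ncard = (G.neighborSet v).ncard :=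
    Nat.card_congr (G.incidenceSetEquivNeighborSet v)
  have hvu : s(v, u) ∈ G.incidenceSet v := ⟨huv, Sym2.mem_mk_left v u⟩
  rw [Set.ncard_sdiff_singleton_of_mem hvu, hcard]
  exact Nat.sub_le_sub_right (hΔ v) 1

theorem eq_or_adj_of_conflict_hanging (hC3 : G.CliqueFree 3) (hC4 : C4Free G)
    {u p₁ q₁ p₂ q₂ : V} (hp₁ : G.Adj u p₁) (hpq₁ : G.Adj p₁ q₁) (hq₁ : q₁ ≠ u)
    (hp₂ : G.Adj u p₂) (hpq₂ : G.Adj p₂ q₂) (hq₂ : q₂ ≠ u)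
    (h : Conflict G s(p₁, q₁) s(p₂, q₂)) : p₁ = p₂ ∨ G.Adj q₁ q₂ := by
  have huq₁ := hC3.not_adj_of_adj_of_adj hp₁ hpq₁
  have huq₂ := hC3.not_adj_of_adj_of_adj hp₂ hpq₂
  have hcn₁ := hC4.commonNeighbors_subsingleton hC3 hq₁.symm
  have hcn₂ := hC4.commonNeighbors_subsingleton hC3 hq₂.symm
  rcases conflict_mk_iff_s8.mp h with (h | h) | (h | h) | (h | h) | (h | h)
  · exact .inl h
  · exact absurd hp₂ (hC3.not_adj_of_adj_of_adj hp₁ h)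
  · exact absurd (h ▸ hp₁) huq₂
  · exact .inl (hcn₂ ⟨hp₁, h.symm⟩ ⟨hp₂, hpq₂.symm⟩)
  · exact absurd (h ▸ hp₂) huq₁
  · exact .inl (hcn₁ ⟨hp₁, hpq₁.symm⟩ ⟨hp₂, h⟩)
  · exact .inl (hcn₁ ⟨hp₁, hpq₁.symm⟩ ⟨hp₂, h ▸ hpq₂.symm⟩)
  · exact .inr h

theorem eq_of_hanging_of_eq_or_adj (hC3 : G.CliqueFree 3) (hC4 : C4Free G)
    {u p₁ q₁ p₂ q₂ p₃ q₃ : V} (hp₁ : G.Adj u p₁) (hpq₁ : G.Adj p₁ q₁)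
    (hp₂ : G.Adj u p₂) (hpq₂ : G.Adj p₂ q₂) (hpq₃ : G.Adj p₃ q₃)
    (h₁₂ : p₁ = p₂ ∨ G.Adj q₁ q₂) (h₁₃ : p₁ = p₃ ∨ G.Adj q₁ q₃) (h₂₃ : p₂ = p₃ ∨ G.Adj q₂ q₃)
    (hne₁₃ : s(p₁, q₁) ≠ s(p₃, q₃)) (hne₂₃ : s(p₂, q₂) ≠ s(p₃, q₃)) : p₁ = p₂ := by
  by_contra hp
  have hq₁₂ : G.Adj q₁ q₂ := h₁₂.resolve_left hp
  rcases h₁₃ with rfl | hq₁₃ <;> rcases h₂₃ with rfl | hq₂₃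
  · exact hp rfl
  · have hne : p₁ ≠ q₂ := fun h => hC3.not_adj_of_adj_of_adj hp₂ hpq₂ (h ▸ hp₁)
    exact hne₁₃ (congrArg _ (hC4.commonNeighbors_subsingleton hC3 hne
      ⟨hpq₁, hq₁₂.symm⟩ ⟨hpq₃, hq₂₃⟩))
  · have hne : p₂ ≠ q₁ := fun h => hC3.not_adj_of_adj_of_adj hp₁ hpq₁ (h ▸ hp₂)
    exact hne₂₃ (congrArg _ (hC4.commonNeighbors_subsingleton hC3 hne
      ⟨hpq₂, hq₁₂⟩ ⟨hpq₃, hq₁₃⟩))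
  · exact hC3.not_adj_of_adj_of_adj hq₁₂ hq₂₃ hq₁₃

theorem ncard_le_of_pairwise_conflict_hanging [Finite V] (hC3 : G.CliqueFree 3)
    (hC4 : C4Free G) {d : ℕ} (hd : 3 ≤ d) (hΔ : ∀ v : V, (G.neighborSet v).ncard ≤ d)
    {u : V} {S : Set (Sym2 V)}
    (hS : ∀ e ∈ S, ∃ p q, e = s(p, q) ∧ G.Adj u p ∧ G.Adj p q ∧ q ≠ u)
    (hconf : S.Pairwise (Conflict G)) : S.ncard ≤ d - 1 := by
  rcases le_or_gt S.ncard 2 with hS2 | hS2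
  · omega
  obtain ⟨e₁, he₁⟩ : S.Nonempty := Set.nonempty_of_ncard_ne_zero (by omega)
  obtain ⟨p₁, q₁, rfl, hp₁, hpq₁, hq₁⟩ := hS e₁ he₁
  have hmem : ∀ q, G.Adj p₁ q → q ≠ u → s(p₁, q) ∈ G.incidenceSet p₁ \ {s(p₁, u)} :=
    fun q hpq hq => ⟨⟨hpq, Sym2.mem_mk_left p₁ q⟩, fun h => hq (Sym2.congr_right.mp h)⟩
  have hstar : S ⊆ G.incidenceSet p₁ \ {s(p₁, u)} := by
    intro e he
    obtain ⟨p, q, rfl, hp, hpq, hq⟩ := hS e he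
    by_cases hee₁ : s(p, q) = s(p₁, q₁)
    · exact hee₁ ▸ hmem q₁ hpq₁ hq₁
    obtain ⟨g, ⟨hg, hge : g ≠ _⟩, hge₁⟩ := Set.exists_ne_of_one_lt_ncard
      (by rw [Set.ncard_sdiff_singleton_of_mem he]; omega) s(p₁, q₁)
    obtain ⟨p₃, q₃, rfl, hp₃, hpq₃, hq₃⟩ := hS _ hg
    obtain rfl : p = p₁ := eq_of_hanging_of_eq_or_adj hC3 hC4 hp hpq hp₁ hpq₁ hpq₃
      (eq_or_adj_of_conflict_hanging hC3 hC4 hp hpq hq hp₁ hpq₁ hq₁ (hconf he he₁ hee₁))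
      (eq_or_adj_of_conflict_hanging hC3 hC4 hp hpq hq hp₃ hpq₃ hq₃ (hconf he hg hge.symm))
      (eq_or_adj_of_conflict_hanging hC3 hC4 hp₁ hpq₁ hq₁ hp₃ hpq₃ hq₃
        (hconf he₁ hg hge₁.symm))
      (Ne.symm hge) (Ne.symm hge₁)
    exact hmem q hpq hq
  exact (Set.ncard_le_ncard hstar).trans (ncard_incidenceSet_diff_le hΔ hp₁.symm)

theorem adj_of_conflict_of_hanging (hC3 : G.CliqueFree 3) (hC4 : C4Free G)
    {u v w p q : V} (huv : G.Adj u v) (hvw : G.Adj v w) (hwu : w ≠ u)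
    (hp : G.Adj u p) (hpq : G.Adj p q) (hqu : q ≠ u) (hpv : p ≠ v) (hqv : q ≠ v)
    (h : Conflict G s(v, w) s(p, q)) : G.Adj w q := by
  have hvp : ¬ G.Adj v p := hC3.not_adj_of_adj_of_adj huv.symm hp
  have hvq : ¬ G.Adj v q := fun hvq =>
    hpv (hC4.commonNeighbors_subsingleton hC3 hqu.symm ⟨hp, hpq.symm⟩ ⟨huv, hvq.symm⟩)
  rcases conflict_mk_iff_s8.mp h with (h | h) | (h | h) | (h | h) | (h | h)
  · exact absurd h.symm hpv
  · exact absurd h hvp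
  · exact absurd h.symm hqv
  · exact absurd h hvq
  · exact absurd (h ▸ hvw) hvp
  · exact absurd (hC4.commonNeighbors_subsingleton hC3 hwu.symm ⟨huv, hvw.symm⟩ ⟨hp, h⟩)
      hpv.symm
  · exact absurd (h ▸ hvw) hvq
  · exact h

theorem exists_eq_mk_of_mem_edgeSet {e : Sym2 V} (he : e ∈ G.edgeSet) {u v : V} (hv : v ∈ e)
    (hu : u ∉ e) : ∃ w, e = s(v, w) ∧ G.Adj v w ∧ w ≠ u := by
  obtain ⟨w, rfl⟩ := Sym2.mem_iff_exists.mp hv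
  exact ⟨w, rfl, he, fun h => hu (h ▸ Sym2.mem_mk_right v w)⟩

theorem exists_hanging_of_mem_edgeSet {e : Sym2 V} (he : e ∈ G.edgeSet) {u v : V} (hu : u ∉ e)
    (hv : v ∉ e) (ha : ∃ a ∈ e, G.Adj u a) :
    ∃ p q, e = s(p, q) ∧ G.Adj u p ∧ G.Adj p q ∧ q ≠ u ∧ p ≠ v ∧ q ≠ v := by
  obtain ⟨p, hpe, hup⟩ := ha
  obtain ⟨q, rfl⟩ := Sym2.mem_iff_exists.mp hpe
  exact ⟨p, q, rfl, hup, he, fun h => hu (h ▸ Sym2.mem_mk_right p q),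
    fun h => hv (h ▸ Sym2.mem_mk_left p q), fun h => hv (h ▸ Sym2.mem_mk_right p q)⟩

theorem eq_of_adj_of_adj_of_conflict_hanging (hC3 : G.CliqueFree 3) (hC4 : C4Free G)
    {u v w p₁ q₁ p₂ q₂ : V} (huv : G.Adj u v) (hvw : G.Adj v w)
    (hp₁ : G.Adj u p₁) (hpq₁ : G.Adj p₁ q₁) (hq₁ : q₁ ≠ u)
    (hp₂ : G.Adj u p₂) (hpq₂ : G.Adj p₂ q₂) (hq₂ : q₂ ≠ u)
    (h : Conflict G s(p₁, q₁) s(p₂, q₂)) (hwq₁ : G.Adj w q₁) (hwq₂ : G.Adj w q₂) :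
    s(p₁, q₁) = s(p₂, q₂) := by
  rcases eq_or_adj_of_conflict_hanging hC3 hC4 hp₁ hpq₁ hq₁ hp₂ hpq₂ hq₂ h with rfl | hq₁₂
  · have hp₁w : p₁ ≠ w := fun h => hC3.not_adj_of_adj_of_adj huv.symm hp₁ (h ▸ hvw)
    exact congrArg _ (hC4.commonNeighbors_subsingleton hC3 hp₁w ⟨hpq₁, hwq₁⟩ ⟨hpq₂, hwq₂⟩)
  · exact absurd hwq₂ (hC3.not_adj_of_adj_of_adj hwq₁ hq₁₂)

theorem ncard_through_le_one_of_hanging [Finite V] (hC3 : G.CliqueFree 3) (hC4 : C4Free G)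
    {u v : V} (huv : G.Adj u v) {F : Set (Sym2 V)} (hF : F ⊆ G.edgeSet)
    (hconf : F.Pairwise (Conflict G)) {f : Sym2 V}
    (hf : f ∈ {e ∈ F | u ∉ e ∧ v ∉ e ∧ ∃ a ∈ e, G.Adj u a}) :
    {e ∈ F | v ∈ e ∧ u ∉ e}.ncard ≤ 1 := by
  obtain ⟨p, q, rfl, hp, hpq, hqu, hpv, hqv⟩ :=
    exists_hanging_of_mem_edgeSet (hF hf.1) hf.2.1 hf.2.2.1 hf.2.2.2
  have hsub : {e ∈ F | v ∈ e ∧ u ∉ e} ⊆ (s(v, ·)) '' G.commonNeighbors v q := by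
    rintro e ⟨he, hve, hue⟩
    have hef : Conflict G e s(p, q) := hconf he hf.1 fun h => hf.2.2.1 (h ▸ hve)
    obtain ⟨w, rfl, hvw, hwu⟩ := exists_eq_mk_of_mem_edgeSet (hF he) hve hue
    have hwq := adj_of_conflict_of_hanging hC3 hC4 huv hvw hwu hp hpq hqu hpv hqv hef
    exact ⟨w, ⟨hvw, hwq.symm⟩, rfl⟩
  calc _ ≤ _ := Set.ncard_le_ncard hsub
    _ ≤ (G.commonNeighbors v q).ncard := Set.ncard_image_le (Set.toFinite _)
    _ ≤ 1 := Set.ncard_le_one_iff_subsingleton.mpr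
      (hC4.commonNeighbors_subsingleton hC3 hqv.symm)

theorem through_eq_empty_of_two_hanging (hC3 : G.CliqueFree 3) (hC4 : C4Free G)
    {u v : V} (huv : G.Adj u v) {F : Set (Sym2 V)} (hF : F ⊆ G.edgeSet)
    (hconf : F.Pairwise (Conflict G)) {f₁ f₂ : Sym2 V}
    (hf₁ : f₁ ∈ {e ∈ F | u ∉ e ∧ v ∉ e ∧ ∃ a ∈ e, G.Adj u a})
    (hf₂ : f₂ ∈ {e ∈ F | u ∉ e ∧ v ∉ e ∧ ∃ a ∈ e, G.Adj u a}) (hne : f₁ ≠ f₂) :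
    {e ∈ F | v ∈ e ∧ u ∉ e} = ∅ := by
  refine Set.eq_empty_of_forall_notMem fun e ⟨he, hve, hue⟩ => hne ?_
  have hef₁ : Conflict G e f₁ := hconf he hf₁.1 fun h => hf₁.2.2.1 (h ▸ hve)
  have hef₂ : Conflict G e f₂ := hconf he hf₂.1 fun h => hf₂.2.2.1 (h ▸ hve)
  obtain ⟨p₁, q₁, rfl, hp₁, hpq₁, hq₁u, hp₁v, hq₁v⟩ :=
    exists_hanging_of_mem_edgeSet (hF hf₁.1) hf₁.2.1 hf₁.2.2.1 hf₁.2.2.2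
  obtain ⟨p₂, q₂, rfl, hp₂, hpq₂, hq₂u, hp₂v, hq₂v⟩ :=
    exists_hanging_of_mem_edgeSet (hF hf₂.1) hf₂.2.1 hf₂.2.2.1 hf₂.2.2.2
  obtain ⟨w, rfl, hvw, hwu⟩ := exists_eq_mk_of_mem_edgeSet (hF he) hve hue
  exact eq_of_adj_of_adj_of_conflict_hanging hC3 hC4 huv hvw hp₁ hpq₁ hq₁u hp₂ hpq₂ hq₂u
    (hconf hf₁.1 hf₂.1 hne)
    (adj_of_conflict_of_hanging hC3 hC4 huv hvw hwu hp₁ hpq₁ hq₁u hp₁v hq₁v hef₁)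
    (adj_of_conflict_of_hanging hC3 hC4 huv hvw hwu hp₂ hpq₂ hq₂u hp₂v hq₂v hef₂)

theorem ncard_through_add_ncard_hanging_le [Finite V] (hC3 : G.CliqueFree 3)
    (hC4 : C4Free G) {d : ℕ} (hd : 3 ≤ d) (hΔ : ∀ v : V, (G.neighborSet v).ncard ≤ d)
    {u v : V} (huv : G.Adj u v) {F : Set (Sym2 V)} (hF : F ⊆ G.edgeSet)
    (hconf : F.Pairwise (Conflict G)) :
    {e ∈ F | v ∈ e ∧ u ∉ e}.ncard + {e ∈ F | u ∉ e ∧ v ∉ e ∧ ∃ a ∈ e, G.Adj u a}.ncard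
      ≤ d - 1 := by
  set T := {e ∈ F | v ∈ e ∧ u ∉ e}
  set H := {e ∈ F | u ∉ e ∧ v ∉ e ∧ ∃ a ∈ e, G.Adj u a}
  have hTd : T.ncard ≤ d - 1 := by
    have hsub : T ⊆ G.incidenceSet v \ {s(v, u)} := fun e he =>
      ⟨⟨hF he.1, he.2.1⟩, fun h => he.2.2 ((Set.mem_singleton_iff.mp h) ▸ Sym2.mem_mk_right v u)⟩
    exact (Set.ncard_le_ncard hsub).trans (ncard_incidenceSet_diff_le hΔ huv.symm)
  have hHd : H.ncard ≤ d - 1 := by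
    refine ncard_le_of_pairwise_conflict_hanging hC3 hC4 hd hΔ (u := u) (fun e he => ?_)
      (hconf.mono (Set.sep_subset _ _))
    obtain ⟨p, q, rfl, hp, hpq, hqu, -⟩ :=
      exists_hanging_of_mem_edgeSet (hF he.1) he.2.1 he.2.2.1 he.2.2.2
    exact ⟨p, q, rfl, hp, hpq, hqu⟩
  rcases H.eq_empty_or_nonempty with hH₀ | ⟨f, hf⟩
  · rw [hH₀, Set.ncard_empty]
    omega
  have hT₁ : T.ncard ≤ 1 := ncard_through_le_one_of_hanging hC3 hC4 huv hF hconf hf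
  rcases le_or_gt H.ncard 1 with hH₁ | hH₂
  · omega
  obtain ⟨f₁, f₂, hf₁, hf₂, hne⟩ := (Set.one_lt_ncard_iff).mp hH₂
  rw [show T = ∅ from through_eq_empty_of_two_hanging hC3 hC4 huv hF hconf hf₁ hf₂ hne,
    Set.ncard_empty]
  omega

theorem ncard_le_of_pairwise_conflict_of_subset_cSet [Finite V] (hC3 : G.CliqueFree 3)
    (hC4 : C4Free G) {d : ℕ} (hd : 3 ≤ d) (hΔ : ∀ v : V, (G.neighborSet v).ncard ≤ d)
    {x y : V} (hxy : G.Adj x y) {F : Set (Sym2 V)} (hF : F ⊆ CSet G s(x, y))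
    (hconf : F.Pairwise (Conflict G)) : F.ncard ≤ 2 * d - 1 := by
  have hFE : F ⊆ G.edgeSet := fun e he => (hF he).1
  set X := {e ∈ F | y ∈ e ∧ x ∉ e} ∪ {e ∈ F | x ∉ e ∧ y ∉ e ∧ ∃ a ∈ e, G.Adj x a}
  set Y := {e ∈ F | x ∈ e ∧ y ∉ e} ∪ {e ∈ F | y ∉ e ∧ x ∉ e ∧ ∃ a ∈ e, G.Adj y a}
  have hX : X.ncard ≤ d - 1 := (Set.ncard_union_le _ _).trans
    (ncard_through_add_ncard_hanging_le hC3 hC4 hd hΔ hxy hFE hconf)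
  have hY : Y.ncard ≤ d - 1 := (Set.ncard_union_le _ _).trans
    (ncard_through_add_ncard_hanging_le hC3 hC4 hd hΔ hxy.symm hFE hconf)
  have hcover : F ⊆ {s(x, y)} ∪ X ∪ Y := by
    intro e he
    by_cases hx : x ∈ e <;> by_cases hy : y ∈ e
    · exact .inl (.inl ((Sym2.mem_and_mem_iff hxy.ne).mp ⟨hx, hy⟩))
    · exact .inr (.inl ⟨he, hx, hy⟩)
    · exact .inl (.inr (.inl ⟨he, hy, hx⟩))
    obtain ⟨a, ha, b, hb, hab⟩ := (hF he).2
    rcases Sym2.mem_iff.mp ha with rfl | rfl <;> rcases hab with rfl | hab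
    · exact absurd hb hx
    · exact .inl (.inr (.inr ⟨he, hx, hy, b, hb, hab⟩))
    · exact absurd hb hy
    · exact .inr (.inr ⟨he, hy, hx, b, hb, hab⟩)
  calc F.ncard ≤ ({s(x, y)} ∪ X ∪ Y).ncard := Set.ncard_le_ncard hcover
    _ ≤ ({s(x, y)} ∪ X).ncard + Y.ncard := Set.ncard_union_le _ _
    _ ≤ 1 + X.ncard + Y.ncard := by grw [Set.ncard_union_le, Set.ncard_singleton]
    _ ≤ 2 * d - 1 := by omega

end ConflictClique

theorem stmt8_general [Fintype V] (G : SimpleGraph V) (d : ℕ) (hd : 3 ≤ d)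
    (hΔ : ∀ v : V, (G.neighborSet v).ncard ≤ d)
    (hC3 : G.CliqueFree 3) (hC4 : C4Free G)
    (M : Set (Sym2 V)) (hstab : LSStable G M)
    (x y : V) (hxy : G.Adj x y) (hmem : s(x, y) ∈ M) :
    (PCSet G M s(x, y)).ncard ≤ 2 * d - 1 :=
  ncard_le_of_pairwise_conflict_of_subset_cSet hC3 hC4 hd hΔ hxy Set.sdiff_subset
    fun _ he _ hf hne => (hstab _ hmem _ he _ hf hne).2

/-- in `{C₃,C₄}`-free graphs, each edge of a locally optimal induced
matching has at most `2d-1` private conflict edges. -/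
theorem stmt8 [Fintype V] (G : SimpleGraph V) (d : ℕ) (hd : 3 ≤ d)
    (hΔ : ∀ v : V, (G.neighborSet v).ncard ≤ d)
    (hC3 : G.CliqueFree 3) (hC4 : C4Free G)
    (M : Set (Sym2 V)) (hmax : IsMaximalInducedMatching G M) (hstab : LSStable G M)
    (x y : V) (hxy : G.Adj x y) (hmem : s(x, y) ∈ M) :
    (PCSet G M s(x, y)).ncard ≤ 2 * d - 1 :=
  stmt8_general G d hd hΔ hC3 hC4 M hstab x y hxy hmem
end

section
/- If G is a claw-free graph of maximum degree at most d with d ≥ 3, then for every edge xy of G, the number c_G(xy) of edges at line-graph distance at most 2 from xy (including xy) satisfies c_G(xy) ≤ (7/6)d² + d. -/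
open Classical

variable {V : Type*}

/-!
Let `T = N[x] ∪ N[y]`, split as `{x, y} ∪ A ∪ B ∪ C` with `A = N(x) \ N[y]`, `B = N(y) \ N[x]`
and `C = N(x) ∩ N(y)`. The edges in conflict with `xy` are exactly the edges meeting `T`, and
counting darts gives `2 c(xy) = ∑_{v ∈ T} (2 deg v - deg_T v) ≤ 2 d |T| - ∑_{v ∈ T} deg_T v`.
Claw-freeness makes `A` and `B` cliques, so `deg_T v ≥ |A|` on `A` and `deg_T v ≥ |B|` on `B`.
A vertex `v ∈ C` either sees all of `C`, so `deg_T v ≥ |C| + 1`, or misses some `w ∈ C`; then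
every vertex of `T` other than `v, w` is adjacent to `v` or `w`, while `x, y` are adjacent to both,
so `deg_T v ≥ |T| - deg_T w ≥ |T| - d`. What is left is a quadratic inequality in `|A|, |B|, |C|`
and `d`, extremal near `|A| = |B| = 2d/3`, `|C| = d/3`.
-/

open Finset SimpleGraph

namespace SimpleGraph

section Counting

variable [Fintype V] [DecidableEq V] (G : SimpleGraph V) [DecidableRel G.Adj] (T : Finset V)

theorem card_filter_dart_fst_mem : #{d : G.Dart | d.fst ∈ T} = ∑ v ∈ T, G.degree v := by
  rw [card_eq_sum_card_fiberwise (s := {d : G.Dart | d.fst ∈ T}) (t := T)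
    fun d hd => (mem_filter.1 hd).2]
  refine sum_congr rfl fun v hv => ?_
  rw [← dart_fst_fiber_card_eq_degree, filter_filter]
  congr 1
  ext d
  simp only [mem_filter, mem_univ, true_and, and_iff_right_iff_imp]
  rintro rfl
  exact hv

theorem card_filter_dart_fst_mem_snd_mem :
    #{d : G.Dart | d.fst ∈ T ∧ d.snd ∈ T} = ∑ v ∈ T, #(G.neighborFinset v ∩ T) := by
  rw [card_eq_sum_card_fiberwise (s := {d : G.Dart | d.fst ∈ T ∧ d.snd ∈ T}) (t := T)
    fun d hd => (mem_filter.1 hd).2.1]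
  refine sum_congr rfl fun v hv => card_bij (fun d _ => d.snd) ?_ ?_ ?_
  · intro d hd
    simp only [mem_filter, mem_univ, true_and] at hd
    obtain ⟨⟨-, hT⟩, rfl⟩ := hd
    exact mem_inter.2 ⟨(mem_neighborFinset _ _ _).2 d.adj, hT⟩
  · intro d hd d' hd' h
    simp only [mem_filter, mem_univ, true_and] at hd hd'
    exact Dart.ext _ _ (Prod.ext (hd.2.trans hd'.2.symm) h)
  · intro w hw
    rw [mem_inter, mem_neighborFinset] at hw
    exact ⟨⟨(v, w), hw.1⟩, by simp [hv, hw.2], rfl⟩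

theorem card_filter_dart_fst_mem_or_snd_mem :
    #{d : G.Dart | d.fst ∈ T ∨ d.snd ∈ T} = 2 * #{e ∈ G.edgeFinset | ∃ v ∈ e, v ∈ T} := by
  rw [card_eq_sum_card_fiberwise (f := Dart.edge) (t := {e ∈ G.edgeFinset | ∃ v ∈ e, v ∈ T}) ?_,
    sum_const_nat (m := 2) fun e he => ?_, mul_comm]
  · rw [mem_filter, mem_edgeFinset] at he
    rw [← G.dart_edge_fiber_card e he.1, filter_filter]
    congr 1
    ext d
    simp only [mem_filter, mem_univ, true_and, and_iff_right_iff_imp]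
    rintro rfl
    obtain ⟨v, hv, hvT⟩ := he.2
    rcases Sym2.mem_iff.1 hv with rfl | rfl
    exacts [Or.inl hvT, Or.inr hvT]
  · intro d hd
    simp only [coe_filter, mem_univ, true_and, Set.mem_ofPred_eq] at hd ⊢
    refine ⟨mem_edgeFinset.2 d.edge_mem, ?_⟩
    rcases hd with h | h
    exacts [⟨_, Sym2.mem_mk_left _ _, h⟩, ⟨_, Sym2.mem_mk_right _ _, h⟩]

theorem two_mul_card_edges_meeting_add_sum_card_inter :
    2 * #{e ∈ G.edgeFinset | ∃ v ∈ e, v ∈ T} + ∑ v ∈ T, #(G.neighborFinset v ∩ T)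
      = 2 * ∑ v ∈ T, G.degree v := by
  have hsymm : #{d : G.Dart | d.snd ∈ T} = #{d : G.Dart | d.fst ∈ T} :=
    card_nbij' Dart.symm Dart.symm (fun d hd => by simpa using hd) (fun d hd => by simpa using hd)
      (fun d _ => d.symm_symm) (fun d _ => d.symm_symm)
  rw [← card_filter_dart_fst_mem_or_snd_mem, ← card_filter_dart_fst_mem_snd_mem,
    ← card_filter_dart_fst_mem, filter_or, filter_and, card_union_add_card_inter, hsymm, two_mul]

end Counting

section EdgeNeighborhood

variable [Fintype V] [DecidableEq V] (G : SimpleGraph V) [DecidableRel G.Adj]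

def privateNeighborFinset (x y : V) : Finset V :=
  G.neighborFinset x \ insert y (G.neighborFinset y)

def commonNeighborFinset (x y : V) : Finset V :=
  G.neighborFinset x ∩ G.neighborFinset y

/-- `N[x] ∪ N[y]`, split into disjoint pieces. -/
def edgeNbhdFinset (x y : V) : Finset V :=
  insert x (insert y (G.privateNeighborFinset x y ∪ G.privateNeighborFinset y x ∪
    G.commonNeighborFinset x y))

variable {G} {x y u : V}

theorem mem_privateNeighborFinset :
    u ∈ G.privateNeighborFinset x y ↔ G.Adj x u ∧ u ≠ y ∧ ¬G.Adj y u := by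
  simp [privateNeighborFinset]

theorem mem_commonNeighborFinset : u ∈ G.commonNeighborFinset x y ↔ G.Adj x u ∧ G.Adj y u := by
  simp [commonNeighborFinset]

theorem commonNeighborFinset_comm : G.commonNeighborFinset y x = G.commonNeighborFinset x y :=
  inter_comm _ _

theorem mem_edgeNbhdFinset : u ∈ G.edgeNbhdFinset x y ↔ u = x ∨ u = y ∨ G.Adj x u ∨ G.Adj y u := by
  simp only [edgeNbhdFinset, mem_insert, mem_union, mem_privateNeighborFinset,
    mem_commonNeighborFinset]
  tauto

theorem edgeNbhdFinset_comm : G.edgeNbhdFinset y x = G.edgeNbhdFinset x y := by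
  ext u
  simp only [mem_edgeNbhdFinset]
  tauto

theorem neighborFinset_subset_edgeNbhdFinset : G.neighborFinset x ⊆ G.edgeNbhdFinset x y :=
  fun _ hu => mem_edgeNbhdFinset.2 (Or.inr (Or.inr (Or.inl ((mem_neighborFinset _ _ _).1 hu))))

theorem sum_edgeNbhdFinset {M : Type*} [AddCommMonoid M] (hxy : x ≠ y) (f : V → M) :
    ∑ v ∈ G.edgeNbhdFinset x y, f v = f x + f y + ∑ v ∈ G.privateNeighborFinset x y, f v +
      ∑ v ∈ G.privateNeighborFinset y x, f v + ∑ v ∈ G.commonNeighborFinset x y, f v := by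
  have hAB : Disjoint (G.privateNeighborFinset x y) (G.privateNeighborFinset y x) := by
    simp only [Finset.disjoint_left, mem_privateNeighborFinset]
    tauto
  have hABC : Disjoint (G.privateNeighborFinset x y ∪ G.privateNeighborFinset y x)
      (G.commonNeighborFinset x y) := by
    simp only [Finset.disjoint_left, mem_union, mem_privateNeighborFinset, mem_commonNeighborFinset]
    tauto
  have hy : y ∉ G.privateNeighborFinset x y ∪ G.privateNeighborFinset y x ∪
      G.commonNeighborFinset x y := by
    simp [mem_privateNeighborFinset, mem_commonNeighborFinset]
  have hx : x ∉ insert y (G.privateNeighborFinset x y ∪ G.privateNeighborFinset y x ∪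
      G.commonNeighborFinset x y) := by
    simp [mem_privateNeighborFinset, mem_commonNeighborFinset, hxy]
  rw [edgeNbhdFinset, sum_insert hx, sum_insert hy, sum_union hABC, sum_union hAB]
  simp only [add_assoc]

theorem card_edgeNbhdFinset (hxy : x ≠ y) :
    #(G.edgeNbhdFinset x y) = #(G.privateNeighborFinset x y) + #(G.privateNeighborFinset y x) +
      #(G.commonNeighborFinset x y) + 2 := by
  simp only [card_eq_sum_ones, sum_edgeNbhdFinset hxy]
  ring

theorem degree_eq_card_privateNeighborFinset_add (hxy : G.Adj x y) :
    G.degree x = #(G.privateNeighborFinset x y) + #(G.commonNeighborFinset x y) + 1 := by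
  have hsplit : G.neighborFinset x =
      insert y (G.privateNeighborFinset x y ∪ G.commonNeighborFinset x y) := by
    ext u
    simp only [mem_neighborFinset, mem_insert, mem_union, mem_privateNeighborFinset,
      mem_commonNeighborFinset]
    constructor
    · intro h
      by_cases huy : u = y <;> by_cases hyu : G.Adj y u <;> tauto
    · rintro (rfl | ⟨h, -⟩ | ⟨h, -⟩) <;> assumption
  have hdisj : Disjoint (G.privateNeighborFinset x y) (G.commonNeighborFinset x y) := by
    simp only [Finset.disjoint_left, mem_privateNeighborFinset, mem_commonNeighborFinset]
    tauto
  rw [← card_neighborFinset_eq_degree, hsplit, card_insert_of_notMem, card_union_of_disjoint hdisj]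
  simp [mem_privateNeighborFinset, mem_commonNeighborFinset]

end EdgeNeighborhood

end SimpleGraph

theorem CSet_mk_eq_edges_meeting_edgeNbhdFinset [Fintype V] [DecidableEq V] (G : SimpleGraph V)
    [DecidableRel G.Adj] (x y : V) :
    CSet G s(x, y) = ↑{e ∈ G.edgeFinset | ∃ v ∈ e, v ∈ G.edgeNbhdFinset x y} := by
  ext e
  simp only [CSet, Conflict, Set.mem_ofPred_eq, coe_filter, SimpleGraph.mem_edgeFinset,
    SimpleGraph.mem_edgeNbhdFinset, Sym2.mem_iff, exists_eq_or_imp, exists_eq_left]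
  grind

namespace ClawFree

variable {G : SimpleGraph V}

theorem adj_or_adj (hG : ClawFree G) {z u v w : V} (hu : G.Adj z u) (hv : G.Adj z v)
    (hw : G.Adj z w) (hvw : v ≠ w) (hnvw : ¬G.Adj v w) (huv : u ≠ v) (huw : u ≠ w) :
    G.Adj v u ∨ G.Adj w u := by
  by_contra! h
  exact hG ⟨z, u, v, w, hu, hv, hw, fun h' => h.1 h'.symm, fun h' => h.2 h'.symm, hnvw,
    huv, huw, hvw⟩

variable [Fintype V] [DecidableEq V] [DecidableRel G.Adj] {x y : V}

theorem isClique_privateNeighborFinset (hG : ClawFree G) (hxy : G.Adj x y) :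
    G.IsClique (G.privateNeighborFinset x y : Set V) := by
  intro u hu w hw huw
  rw [mem_coe, mem_privateNeighborFinset] at hu hw
  by_contra h
  rcases hG.adj_or_adj hxy hu.1 hw.1 huw h hu.2.1.symm hw.2.1.symm with h' | h'
  exacts [hu.2.2 h'.symm, hw.2.2 h'.symm]

theorem card_privateNeighborFinset_le (hG : ClawFree G) (hxy : G.Adj x y) {v : V}
    (hv : v ∈ G.privateNeighborFinset x y) :
    #(G.privateNeighborFinset x y) ≤ #(G.neighborFinset v ∩ G.edgeNbhdFinset x y) := by
  have hvx : G.Adj x v := (mem_privateNeighborFinset.1 hv).1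
  have hsub : insert x ((G.privateNeighborFinset x y).erase v) ⊆
      G.neighborFinset v ∩ G.edgeNbhdFinset x y := by
    intro u hu
    rw [mem_inter, mem_neighborFinset, mem_edgeNbhdFinset]
    rcases mem_insert.1 hu with rfl | hu
    · exact ⟨hvx.symm, Or.inl rfl⟩
    obtain ⟨huv, hu⟩ := mem_erase.1 hu
    exact ⟨hG.isClique_privateNeighborFinset hxy hv hu huv.symm,
      Or.inr (Or.inr (Or.inl (mem_privateNeighborFinset.1 hu).1))⟩
  have hx : x ∉ (G.privateNeighborFinset x y).erase v := fun h =>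
    G.irrefl (mem_privateNeighborFinset.1 (mem_of_mem_erase h)).1
  calc #(G.privateNeighborFinset x y)
      = #(insert x ((G.privateNeighborFinset x y).erase v)) := by
        rw [card_insert_of_notMem hx, card_erase_add_one hv]
    _ ≤ _ := card_le_card hsub

theorem card_edgeNbhdFinset_le (hG : ClawFree G) (hxy : G.Adj x y) {v w : V}
    (hv : v ∈ G.commonNeighborFinset x y) (hw : w ∈ G.commonNeighborFinset x y) (hvw : v ≠ w)
    (hnvw : ¬G.Adj v w) :
    #(G.edgeNbhdFinset x y) ≤ #(G.neighborFinset v ∩ G.edgeNbhdFinset x y) +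
      #(G.neighborFinset w ∩ G.edgeNbhdFinset x y) := by
  set T := G.edgeNbhdFinset x y
  rw [mem_commonNeighborFinset] at hv hw
  have hcover : T ⊆ insert v (insert w ((G.neighborFinset v ∩ T) ∪ (G.neighborFinset w ∩ T))) := by
    intro u hu
    simp only [mem_insert, mem_union, mem_inter, mem_neighborFinset]
    by_cases huv : u = v
    · exact Or.inl huv
    by_cases huw : u = w
    · exact Or.inr (Or.inl huw)
    right; right
    rcases mem_edgeNbhdFinset.1 hu with rfl | rfl | hxu | hyu
    · exact Or.inl ⟨hv.1.symm, hu⟩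
    · exact Or.inl ⟨hv.2.symm, hu⟩
    · rcases hG.adj_or_adj hxu hv.1 hw.1 hvw hnvw huv huw with h | h
      exacts [Or.inl ⟨h, hu⟩, Or.inr ⟨h, hu⟩]
    · rcases hG.adj_or_adj hyu hv.2 hw.2 hvw hnvw huv huw with h | h
      exacts [Or.inl ⟨h, hu⟩, Or.inr ⟨h, hu⟩]
  have hxy_sub : {x, y} ⊆ (G.neighborFinset v ∩ T) ∩ (G.neighborFinset w ∩ T) := by
    have hxT : x ∈ T := mem_edgeNbhdFinset.2 (Or.inl rfl)
    have hyT : y ∈ T := mem_edgeNbhdFinset.2 (Or.inr (Or.inl rfl))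
    intro u hu
    simp only [mem_insert, mem_singleton] at hu
    rcases hu with rfl | rfl <;> simp [*, hv.1.symm, hv.2.symm, hw.1.symm, hw.2.symm]
  calc #T ≤ #(insert v (insert w ((G.neighborFinset v ∩ T) ∪ (G.neighborFinset w ∩ T)))) :=
        card_le_card hcover
    _ ≤ #((G.neighborFinset v ∩ T) ∪ (G.neighborFinset w ∩ T)) + 2 :=
        (card_insert_le _ _).trans (by grind [card_insert_le])
    _ ≤ #((G.neighborFinset v ∩ T) ∪ (G.neighborFinset w ∩ T)) +
          #((G.neighborFinset v ∩ T) ∩ (G.neighborFinset w ∩ T)) := by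
        have := card_le_card hxy_sub
        rw [card_pair hxy.ne] at this
        omega
    _ = _ := card_union_add_card_inter _ _

theorem card_commonNeighborFinset_add_one_le_or (hG : ClawFree G) (hxy : G.Adj x y) {d : ℕ}
    (hΔ : ∀ v, G.degree v ≤ d) {v : V} (hv : v ∈ G.commonNeighborFinset x y) :
    #(G.commonNeighborFinset x y) + 1 ≤ #(G.neighborFinset v ∩ G.edgeNbhdFinset x y) ∨
      #(G.edgeNbhdFinset x y) ≤ #(G.neighborFinset v ∩ G.edgeNbhdFinset x y) + d := by
  set C := G.commonNeighborFinset x y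
  set T := G.edgeNbhdFinset x y
  by_cases hall : ∃ w ∈ C, w ≠ v ∧ ¬G.Adj v w
  · right
    obtain ⟨w, hw, hwv, hnvw⟩ := hall
    have hwd : #(G.neighborFinset w ∩ T) ≤ d :=
      (card_le_card inter_subset_left).trans ((card_neighborFinset_eq_degree G w).trans_le (hΔ w))
    have : #T ≤ #(G.neighborFinset v ∩ T) + #(G.neighborFinset w ∩ T) :=
      hG.card_edgeNbhdFinset_le hxy hv hw hwv.symm hnvw
    omega
  · left
    have hvC := mem_commonNeighborFinset.1 hv
    have hsub : insert x (insert y (C.erase v)) ⊆ G.neighborFinset v ∩ T := by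
      intro u hu
      rw [mem_inter, mem_neighborFinset, mem_edgeNbhdFinset]
      rcases mem_insert.1 hu with rfl | hu
      · exact ⟨hvC.1.symm, Or.inl rfl⟩
      rcases mem_insert.1 hu with rfl | hu
      · exact ⟨hvC.2.symm, Or.inr (Or.inl rfl)⟩
      obtain ⟨huv, hu⟩ := mem_erase.1 hu
      exact ⟨by_contra fun h => hall ⟨u, hu, huv, h⟩,
        Or.inr (Or.inr (Or.inl (mem_commonNeighborFinset.1 hu).1))⟩
    have hy : y ∉ C.erase v := fun h => G.irrefl (mem_commonNeighborFinset.1 (mem_of_mem_erase h)).2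
    have hx : x ∉ insert y (C.erase v) := by
      rw [mem_insert, not_or]
      exact ⟨hxy.ne, fun h => G.irrefl (mem_commonNeighborFinset.1 (mem_of_mem_erase h)).1⟩
    calc #C + 1 = #(insert x (insert y (C.erase v))) := by
          rw [card_insert_of_notMem hx, card_insert_of_notMem hy, card_erase_add_one hv]
      _ ≤ _ := card_le_card hsub

theorem le_sum_card_neighborFinset_inter_edgeNbhdFinset (hG : ClawFree G) (hxy : G.Adj x y) :
    (#(G.privateNeighborFinset x y) + #(G.commonNeighborFinset x y) + 1) +
        (#(G.privateNeighborFinset y x) + #(G.commonNeighborFinset x y) + 1) +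
        #(G.privateNeighborFinset x y) * #(G.privateNeighborFinset x y) +
        #(G.privateNeighborFinset y x) * #(G.privateNeighborFinset y x) +
        ∑ v ∈ G.commonNeighborFinset x y, #(G.neighborFinset v ∩ G.edgeNbhdFinset x y) ≤
      ∑ v ∈ G.edgeNbhdFinset x y, #(G.neighborFinset v ∩ G.edgeNbhdFinset x y) := by
  have hx : #(G.neighborFinset x ∩ G.edgeNbhdFinset x y) =
      #(G.privateNeighborFinset x y) + #(G.commonNeighborFinset x y) + 1 := by
    rw [inter_eq_left.2 neighborFinset_subset_edgeNbhdFinset, card_neighborFinset_eq_degree,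
      degree_eq_card_privateNeighborFinset_add hxy]
  have hy : #(G.neighborFinset y ∩ G.edgeNbhdFinset x y) =
      #(G.privateNeighborFinset y x) + #(G.commonNeighborFinset x y) + 1 := by
    rw [← edgeNbhdFinset_comm, inter_eq_left.2 neighborFinset_subset_edgeNbhdFinset,
      card_neighborFinset_eq_degree, degree_eq_card_privateNeighborFinset_add hxy.symm,
      commonNeighborFinset_comm]
  have hA := card_nsmul_le_sum _ _ _ fun v hv => hG.card_privateNeighborFinset_le hxy hv
  have hB := card_nsmul_le_sum _ _ _ fun v hv => hG.card_privateNeighborFinset_le hxy.symm hv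
  rw [edgeNbhdFinset_comm, smul_eq_mul] at hB
  rw [smul_eq_mul] at hA
  rw [sum_edgeNbhdFinset hxy.ne, hx, hy]
  omega

theorem card_mul_min_le_sum_card_inter (hG : ClawFree G) (hxy : G.Adj x y) {d : ℕ}
    (hΔ : ∀ v, G.degree v ≤ d) :
    (#(G.commonNeighborFinset x y) : ℝ) *
        min (#(G.commonNeighborFinset x y) + 1 : ℝ) (#(G.edgeNbhdFinset x y) - d) ≤
      ∑ v ∈ G.commonNeighborFinset x y, (#(G.neighborFinset v ∩ G.edgeNbhdFinset x y) : ℝ) := by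
  rw [← nsmul_eq_mul]
  refine card_nsmul_le_sum _ _ _ fun v hv => ?_
  rcases hG.card_commonNeighborFinset_add_one_le_or hxy hΔ hv with h | h
  · exact (min_le_left _ _).trans (by exact_mod_cast h)
  · refine (min_le_right _ _).trans ?_
    rw [sub_le_iff_le_add]
    exact_mod_cast h

end ClawFree

theorem le_seven_div_six_mul_sq_add {a b c d N : ℝ} (hc : 0 ≤ c) (hac : a + c + 1 ≤ d)
    (hbc : b + c + 1 ≤ d)
    (h : 2 * N + (a + c + 1) + (b + c + 1) + a ^ 2 + b ^ 2 + c * min (c + 1) (a + b + c + 2 - d)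
      ≤ 2 * d * (a + b + c + 2)) :
    N ≤ 7 / 6 * d ^ 2 + d := by
  have hu : 0 ≤ d - 1 - c - a := by linarith
  have hv : 0 ≤ d - 1 - c - b := by linarith
  rcases min_choice (c + 1) (a + b + c + 2 - d) with hm | hm <;> rw [hm] at h
  · nlinarith [sq_nonneg (d - 3 * c), mul_nonneg hu hc, mul_nonneg hv hc, sq_nonneg (d - 1 - c - a),
      sq_nonneg (d - 1 - c - b)]
  · nlinarith [sq_nonneg (2 * d - 3 * c), mul_nonneg hu hc, mul_nonneg hv hc,
      sq_nonneg (d - 1 - c - a), sq_nonneg (d - 1 - c - b), sq_nonneg c]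

theorem stmt13_general [Fintype V] (G : SimpleGraph V) (d : ℕ)
    (hΔ : ∀ v : V, (G.neighborSet v).ncard ≤ d) (hclaw : ClawFree G)
    (x y : V) (hxy : G.Adj x y) :
    ((CSet G s(x, y)).ncard : ℝ) ≤ (7 / 6) * (d : ℝ) ^ 2 + (d : ℝ) := by
  have hdeg : ∀ v, G.degree v ≤ d := fun v => by
    simpa only [← coe_neighborFinset, Set.ncard_coe_finset, card_neighborFinset_eq_degree]
      using hΔ v
  have hcount := G.two_mul_card_edges_meeting_add_sum_card_inter (G.edgeNbhdFinset x y)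
  have hdegT : ∑ v ∈ G.edgeNbhdFinset x y, G.degree v ≤ #(G.edgeNbhdFinset x y) * d := by
    simpa using sum_le_sum fun v (_ : v ∈ G.edgeNbhdFinset x y) => hdeg v
  have hlow := hclaw.le_sum_card_neighborFinset_inter_edgeNbhdFinset hxy
  have hC := hclaw.card_mul_min_le_sum_card_inter hxy hdeg
  have hx := (degree_eq_card_privateNeighborFinset_add hxy).symm.trans_le (hdeg x)
  have hy := (degree_eq_card_privateNeighborFinset_add hxy.symm).symm.trans_le (hdeg y)
  rw [commonNeighborFinset_comm] at hy
  rw [card_edgeNbhdFinset hxy.ne] at hC hdegT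
  rw [CSet_mk_eq_edges_meeting_edgeNbhdFinset, Set.ncard_coe_finset]
  refine le_seven_div_six_mul_sq_add (a := #(G.privateNeighborFinset x y))
    (b := #(G.privateNeighborFinset y x)) (Nat.cast_nonneg _) (by exact_mod_cast hx)
    (by exact_mod_cast hy) ?_
  have hsum := (Nat.cast_le (α := ℝ)).2
    ((Nat.add_le_add_left hlow _).trans (hcount.trans_le (Nat.mul_le_mul_left 2 hdegT)))
  push_cast at hC hsum
  linarith

/-- in claw-free graphs, every edge has at most `(7/6)d² + d` conflict edges. -/
theorem stmt13 [Fintype V] (G : SimpleGraph V) (d : ℕ) (hd : 3 ≤ d)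
    (hΔ : ∀ v : V, (G.neighborSet v).ncard ≤ d) (hclaw : ClawFree G)
    (x y : V) (hxy : G.Adj x y) :
    ((CSet G s(x, y)).ncard : ℝ) ≤ (7 / 6) * (d : ℝ) ^ 2 + (d : ℝ) :=
  stmt13_general G d hΔ hclaw x y hxy
end

section
/- Let H be a graph whose vertex set is partitioned into sets N_x, N_{xy}, N_y of sizes d_x, d_{xy}, d_y respectively, such that N_x and N_y are cliques in H, and both H[N_x ∪ N_{xy}] and H[N_{xy} ∪ N_y] have independence number at most 2. Then the number of edges of H satisfies m(H) ≥ C(d_x, 2) + C(p, 2) + C(d_{xy} − p, 2) + C(d_y, 2) + p(d_x + d_y) for some integer p with 0 ≤ p ≤ d_{xy}/2, where C(n, 2) denotes the binomial coefficient n choose 2. -/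
open Classical

variable {V : Type*}

/-! Repeatedly delete a non-adjacent pair `u, v` from `N_xy`. Since the independence number of
`H[N_x ∪ N_xy]` and of `H[N_xy ∪ N_y]` is at most 2, every other remaining vertex is adjacent to
`u` or `v`, so the pair carries at least as many edges as there are remaining vertices. After `p`
deletions what is left of `N_xy` is a clique, and the costs of the deletions add up to the claimed
bound because `C(q + 1, 2) = C(q, 2) + q`. -/

theorem Nat.add_one_choose_two (n : ℕ) : (n + 1).choose 2 = n.choose 2 + n := by
  rw [Nat.choose_succ_succ', Nat.choose_one_right, add_comm]

namespace SimpleGraph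

open Finset

variable (H : SimpleGraph V)

noncomputable def edgesIn (S : Finset V) : Finset (Sym2 V) := {e ∈ S.sym2 | e ∈ H.edgeSet}

variable {H}

lemma edgesIn_mono {S T : Finset V} (h : S ⊆ T) : H.edgesIn S ⊆ H.edgesIn T :=
  filter_subset_filter _ (sym2_mono h)

lemma edgesIn_insert {u : V} {T : Finset V} (hu : u ∉ T) :
    H.edgesIn (insert u T) =
      H.edgesIn T ∪ {w ∈ T | H.Adj u w}.image (fun w => s(u, w)) := by
  ext e
  induction e using Sym2.ind with
  | h a b =>
    simp only [edgesIn, mem_union, mem_filter, mem_image, mk_mem_sym2_iff, mem_insert,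
      mem_edgeSet, Sym2.eq_iff]
    constructor
    · rintro ⟨⟨rfl | ha, rfl | hb⟩, hab⟩
      · exact absurd hab H.irrefl
      · exact Or.inr ⟨b, ⟨hb, hab⟩, Or.inl ⟨rfl, rfl⟩⟩
      · exact Or.inr ⟨a, ⟨ha, hab.symm⟩, Or.inr ⟨rfl, rfl⟩⟩
      · exact Or.inl ⟨⟨ha, hb⟩, hab⟩
    · rintro (⟨⟨ha, hb⟩, hab⟩ | ⟨w, ⟨hw, huw⟩, ⟨rfl, rfl⟩ | ⟨rfl, rfl⟩⟩)
      · exact ⟨⟨Or.inr ha, Or.inr hb⟩, hab⟩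
      · exact ⟨⟨Or.inl rfl, Or.inr hw⟩, huw⟩
      · exact ⟨⟨Or.inr hw, Or.inl rfl⟩, huw.symm⟩

lemma card_edgesIn_insert {u : V} {T : Finset V} (hu : u ∉ T) :
    #(H.edgesIn (insert u T)) = #(H.edgesIn T) + #{w ∈ T | H.Adj u w} := by
  rw [edgesIn_insert hu, card_union_of_disjoint,
    card_image_of_injOn fun _ _ _ _ h => Sym2.congr_right.1 h]
  simp only [Finset.disjoint_right, mem_image, edgesIn, mem_filter, mem_sym2_iff]
  rintro _ ⟨w, -, rfl⟩ ⟨h, -⟩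
  exact hu (h u (Sym2.mem_mk_left u w))

lemma card_edgesIn_insert_insert_ge {u v : V} {T : Finset V} (hu : u ∉ T) (hv : v ∉ T)
    (huv : u ≠ v) (hdom : ∀ w ∈ T, H.Adj u w ∨ H.Adj v w) :
    #(H.edgesIn T) + #T ≤ #(H.edgesIn (insert u (insert v T))) := by
  have hu' : u ∉ insert v T := by simp [hu, huv]
  have hcover : T ⊆ {w ∈ T | H.Adj u w} ∪ {w ∈ T | H.Adj v w} := fun w hw => by
    simpa [mem_union, mem_filter, hw] using hdom w hw
  have hfilter : {w ∈ T | H.Adj u w} ⊆ {w ∈ insert v T | H.Adj u w} :=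
    filter_subset_filter _ (subset_insert v T)
  have hT := (card_le_card hcover).trans (card_union_le _ _)
  have hu_nbrs := card_le_card hfilter
  rw [card_edgesIn_insert hu', card_edgesIn_insert hv]
  omega

lemma card_edgesIn_add_card_edgesIn_le {A B : Finset V} (h : Disjoint A B) :
    #(H.edgesIn A) + #(H.edgesIn B) ≤ #(H.edgesIn (A ∪ B)) := by
  rw [← card_union_of_disjoint]
  · exact card_le_card (union_subset (edgesIn_mono subset_union_left)
      (edgesIn_mono subset_union_right))
  · rw [Finset.disjoint_left]
    intro e heA heB
    simp only [edgesIn, mem_filter, mem_sym2_iff] at heA heB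
    exact Finset.disjoint_left.1 h (heA.1 _ (Sym2.out_fst_mem e)) (heB.1 _ (Sym2.out_fst_mem e))

lemma IsClique.choose_two_le_card_edgesIn {S : Finset V} (hS : H.IsClique (S : Set V)) :
    (#S).choose 2 ≤ #(H.edgesIn S) := by
  induction S using Finset.induction_on with
  | empty => simp
  | insert u T hu ih =>
    have hT : H.IsClique (T : Set V) := hS.subset (by simp)
    have hadj : {w ∈ T | H.Adj u w} = T := filter_true_of_mem fun w hw =>
      hS (by simp) (by simp [hw]) (fun h => hu (h ▸ hw))
    rw [card_edgesIn_insert hu, hadj, card_insert_of_notMem hu, Nat.add_one_choose_two]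
    exact Nat.add_le_add_right (ih hT) _

theorem exists_le_card_edgesIn_union {A Y : Finset V} (hAY : Disjoint A Y)
    (hdom : ∀ u ∈ Y, ∀ v ∈ Y, u ≠ v → ¬ H.Adj u v →
      ∀ w ∈ A ∪ Y, w ≠ u → w ≠ v → H.Adj u w ∨ H.Adj v w) :
    ∃ p : ℕ, 2 * p ≤ #Y ∧
      #(H.edgesIn A) + p.choose 2 + (#Y - p).choose 2 + p * #A ≤ #(H.edgesIn (A ∪ Y)) := by
  induction Y using Finset.strongInduction with
  | H Y ih =>
  by_cases hY : H.IsClique (Y : Set V)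
  · refine ⟨0, by simp, ?_⟩
    simpa using (Nat.add_le_add_left hY.choose_two_le_card_edgesIn _).trans
      (card_edgesIn_add_card_edgesIn_le hAY)
  obtain ⟨u, hu, v, hv, huv, hnadj⟩ : ∃ u ∈ Y, ∃ v ∈ Y, u ≠ v ∧ ¬ H.Adj u v := by
    simpa [IsClique, Set.Pairwise] using hY
  set Y' := (Y.erase u).erase v
  have hY' : Y' ⊂ Y := (erase_ssubset (mem_erase.2 ⟨huv.symm, hv⟩)).trans (erase_ssubset hu)
  have hsub : A ∪ Y' ⊆ A ∪ Y := union_subset_union_right hY'.subset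
  obtain ⟨p, hp, hbound⟩ := ih Y' hY' (hAY.mono_right hY'.subset)
    fun a ha b hb hab hnab w hw => hdom a (hY'.subset ha) b (hY'.subset hb) hab hnab w (hsub hw)
  have hsplit : A ∪ Y = insert u (insert v (A ∪ Y')) := by
    ext w
    simp only [Y', mem_union, mem_insert, mem_erase]
    grind
  have hu' : u ∉ A ∪ Y' := by simp [Y', disjoint_right.1 hAY hu]
  have hv' : v ∉ A ∪ Y' := by simp [Y', disjoint_right.1 hAY hv]
  have hstep := card_edgesIn_insert_insert_ge (H := H) hu' hv' huv
    fun w hw => hdom u hu v hv huv hnadj w (hsub hw) (ne_of_mem_of_not_mem hw hu')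
      (ne_of_mem_of_not_mem hw hv')
  have hcardY : #Y = #Y' + 2 := by
    rw [card_erase_of_mem (mem_erase.2 ⟨huv.symm, hv⟩), card_erase_of_mem hu]
    have := one_lt_card.2 ⟨u, hu, v, hv, huv⟩
    omega
  have hcardT : #(A ∪ Y') = #A + #Y' := card_union_of_disjoint (hAY.mono_right hY'.subset)
  refine ⟨p + 1, by omega, ?_⟩
  rw [hsplit, show #Y - (p + 1) = #Y' - p + 1 by omega, Nat.add_one_choose_two,
    Nat.add_one_choose_two, add_mul, one_mul]
  omega

lemma card_edgesIn_univ [Fintype V] : #(H.edgesIn univ) = H.edgeSet.ncard := by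
  rw [Set.ncard_eq_toFinset_card']
  congr 1
  ext e
  simp [edgesIn]

lemma adj_or_adj_of_not_adj {S : Set V}
    (hind : ∀ a ∈ S, ∀ b ∈ S, ∀ c ∈ S,
      ¬ H.Adj a b → ¬ H.Adj a c → ¬ H.Adj b c → a = b ∨ a = c ∨ b = c)
    {u v w : V} (hu : u ∈ S) (hv : v ∈ S) (hw : w ∈ S) (huv : u ≠ v) (hnadj : ¬ H.Adj u v)
    (hwu : w ≠ u) (hwv : w ≠ v) : H.Adj u w ∨ H.Adj v w := by
  by_contra! h
  rcases hind u hu v hv w hw hnadj h.1 h.2 with h | h | h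
  exacts [huv h, hwu h.symm, hwv h.symm]

end SimpleGraph

open Finset SimpleGraph in
/-- edge lower bound for graphs partitioned into `N_x, N_{xy}, N_y`
with `N_x, N_y` cliques and the two side-unions having independence number at most 2. -/
theorem stmt14 {W : Type*} [Fintype W] (H : SimpleGraph W)
    (Nx Nxy Ny : Set W)
    (hdisj₁ : Disjoint Nx Nxy) (hdisj₂ : Disjoint Nx Ny) (hdisj₃ : Disjoint Nxy Ny)
    (hcover : Nx ∪ Nxy ∪ Ny = Set.univ)
    (hcliquex : H.IsClique Nx) (hcliquey : H.IsClique Ny)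
    (hindx : ∀ a ∈ Nx ∪ Nxy, ∀ b ∈ Nx ∪ Nxy, ∀ c ∈ Nx ∪ Nxy,
      ¬ H.Adj a b → ¬ H.Adj a c → ¬ H.Adj b c → a = b ∨ a = c ∨ b = c)
    (hindy : ∀ a ∈ Nxy ∪ Ny, ∀ b ∈ Nxy ∪ Ny, ∀ c ∈ Nxy ∪ Ny,
      ¬ H.Adj a b → ¬ H.Adj a c → ¬ H.Adj b c → a = b ∨ a = c ∨ b = c) :
    ∃ p : ℕ, 2 * p ≤ Nxy.ncard ∧
      H.edgeSet.ncard ≥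
        Nat.choose Nx.ncard 2 + Nat.choose p 2 + Nat.choose (Nxy.ncard - p) 2 +
          Nat.choose Ny.ncard 2 + p * (Nx.ncard + Ny.ncard) := by
  rw [← card_edgesIn_univ]
  simp only [Set.ncard_eq_toFinset_card']
  have hdom : ∀ u ∈ Nxy.toFinset, ∀ v ∈ Nxy.toFinset, u ≠ v → ¬ H.Adj u v →
      ∀ w ∈ Nx.toFinset ∪ Ny.toFinset ∪ Nxy.toFinset, w ≠ u → w ≠ v →
        H.Adj u w ∨ H.Adj v w := by
    intro u hu v hv huv hnadj w hw
    simp only [Set.mem_toFinset, mem_union] at hu hv hw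
    rcases hw with (hw | hw) | hw
    · exact H.adj_or_adj_of_not_adj hindx (.inr hu) (.inr hv) (.inl hw) huv hnadj
    · exact H.adj_or_adj_of_not_adj hindy (.inl hu) (.inl hv) (.inr hw) huv hnadj
    · exact H.adj_or_adj_of_not_adj hindx (.inr hu) (.inr hv) (.inr hw) huv hnadj
  have hXZ : Disjoint Nx.toFinset Ny.toFinset := Set.disjoint_toFinset.2 hdisj₂
  obtain ⟨p, hp, hbound⟩ := exists_le_card_edgesIn_union
    (disjoint_union_left.2 ⟨Set.disjoint_toFinset.2 hdisj₁,
      (Set.disjoint_toFinset.2 hdisj₃).symm⟩) hdom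
  have hcliques := Nat.add_le_add (IsClique.choose_two_le_card_edgesIn (by simpa using hcliquex))
    (IsClique.choose_two_le_card_edgesIn (by simpa using hcliquey))
    |>.trans (card_edgesIn_add_card_edgesIn_le hXZ)
  have huniv : Nx.toFinset ∪ Ny.toFinset ∪ Nxy.toFinset = univ := by
    simp [← Set.toFinset_union, ← hcover, Set.union_right_comm]
  rw [card_union_of_disjoint hXZ, huniv] at hbound
  exact ⟨p, hp, by omega⟩
end

section
/- For real numbers d_x, d_{xy}, d_y, p satisfying d_x + d_{xy} ≤ 1, d_y + d_{xy} ≤ 1, 0 ≤ p ≤ d_{xy}/2, and d_x, d_{xy}, d_y, p ≥ 0, the function f(d_x, d_{xy}, d_y, p) = d_x + d_{xy} + d_y − (1/2)d_x² − (1/2)p² − (1/2)(d_{xy} − p)² − (1/2)d_y² − p(d_x + d_y) satisfies f ≤ 7/6, with the maximum value 7/6 attained (e.g., at d_x = d_y = 2/3, d_{xy} = 1/3, p = 0). -/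
open Classical

variable {V : Type*}

/-!
For fixed `dxy` and `p` the objective is increasing in `dx` and in `dy` up to `1 - p ≥ 1 - dxy`,
so it is largest at `dx = dy = 1 - dxy`. There
`7/6 - f = 3/2 (dxy - 1/3)² + p (p + 2 - 3 dxy)`, which is clearly nonnegative when `dxy ≤ 2/3`
and follows from completing the square in `p` when `2/3 < dxy ≤ 1`.
-/

noncomputable def sideTerm (p x : ℝ) : ℝ := x - x ^ 2 / 2 - p * x

lemma sideTerm_mono {p x y : ℝ} (hxy : x ≤ y) (hy : y + p ≤ 1) :
    sideTerm p x ≤ sideTerm p y := by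
  unfold sideTerm
  nlinarith [mul_nonneg (sub_nonneg.2 hxy) (sub_nonneg.2 hxy)]

lemma seven_sixths_sub_sideTerm_eq (c p : ℝ) :
    7 / 6 - (2 * sideTerm p (1 - c) + c - p ^ 2 / 2 - (c - p) ^ 2 / 2)
      = 3 / 2 * (c - 1 / 3) ^ 2 + p * (p + 2 - 3 * c) := by
  unfold sideTerm
  ring

lemma two_mul_sideTerm_one_sub_add_le {c p : ℝ} (hp : 0 ≤ p) (hpc : p ≤ c / 2) (hc : c ≤ 1) :
    2 * sideTerm p (1 - c) + c - p ^ 2 / 2 - (c - p) ^ 2 / 2 ≤ 7 / 6 := by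
  rw [← sub_nonneg, seven_sixths_sub_sideTerm_eq]
  rcases le_or_gt c (2 / 3) with hc' | hc'
  · exact add_nonneg (by positivity) (mul_nonneg hp (by linarith))
  · nlinarith [sq_nonneg (p - (3 * c - 2) / 2)]

/-- the constrained maximum of
`f(dx,dxy,dy,p) = dx + dxy + dy - dx²/2 - p²/2 - (dxy-p)²/2 - dy²/2 - p(dx+dy)` is `7/6`. -/
theorem stmt15 :
    (∀ dx dxy dy p : ℝ, dx + dxy ≤ 1 → dy + dxy ≤ 1 → 0 ≤ p → p ≤ dxy / 2 →
      0 ≤ dx → 0 ≤ dxy → 0 ≤ dy →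
      dx + dxy + dy - (1 / 2) * dx ^ 2 - (1 / 2) * p ^ 2 - (1 / 2) * (dxy - p) ^ 2 -
        (1 / 2) * dy ^ 2 - p * (dx + dy) ≤ 7 / 6) ∧
    ((2 : ℝ) / 3 + 1 / 3 + 2 / 3 - (1 / 2) * (2 / 3) ^ 2 - (1 / 2) * (0 : ℝ) ^ 2 -
        (1 / 2) * ((1 : ℝ) / 3 - 0) ^ 2 - (1 / 2) * (2 / 3) ^ 2 - 0 * (2 / 3 + 2 / 3)
      = 7 / 6) := by
  refine ⟨fun dx dxy dy p hx hy hp hpc hdx _ _ => ?_, by norm_num⟩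
  have hdx_le := sideTerm_mono (p := p) (show dx ≤ 1 - dxy by linarith) (by linarith)
  have hdy_le := sideTerm_mono (p := p) (show dy ≤ 1 - dxy by linarith) (by linarith)
  have hreduced := two_mul_sideTerm_one_sub_add_le hp hpc (show dxy ≤ 1 by linarith)
  calc _ = sideTerm p dx + sideTerm p dy + dxy - p ^ 2 / 2 - (dxy - p) ^ 2 / 2 := by
          unfold sideTerm
          ring
    _ ≤ 7 / 6 := by linarith
end
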